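/- arXiv:1105.0231 — 2 statements merged into one kernel-verified Lean document; each statement's English description precedes it below -/
import Mathlib

section
/- At every point of U, y satisfies the decoupled Riccati equation along forward characteristics: y_t + c·y_x = a₀ + a₂·y², where a₂ < 0 (Theorem 1.2, equation for y; when m is constant this reduces to Lax's equation y′ = a₂·y² for the p-system). -/
/-!
Write `D = ∂_t + c ∂_x` for the derivative along forward characteristics. Differentiating `ỹ`
along `D` and eliminating every time derivative with the Euler system and with its `x`-derivative
(mixed partials of `C²` functions commute) gives
`D ỹ = ã₀ + ã₂ ỹ² + (3(3 - γ) / (2(3γ - 1))) (c m_x / m) ỹ`.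
Since `m_t = 0`, `D (m^e) = e m^(e-1) c m_x`, so the gauge factor `m^e` with
`e = -3(3 - γ) / (2(3γ - 1))` cancels the linear term and turns `ã₀, ã₂` into `a₀, a₂`.
-/

open Real

/-- Partial derivative with respect to `t` (the first coordinate). -/
noncomputable def pdt (f : ℝ × ℝ → ℝ) (pt : ℝ × ℝ) : ℝ := fderiv ℝ f pt (1, 0)

/-- Partial derivative with respect to `x` (the second coordinate). -/
noncomputable def pdx (f : ℝ × ℝ → ℝ) (pt : ℝ × ℝ) : ℝ := fderiv ℝ f pt (0, 1)

open Set Filter Topology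

def HasPartials (f : ℝ × ℝ → ℝ) (x : ℝ × ℝ) (ft fx : ℝ) : Prop :=
  ∃ L : ℝ × ℝ →L[ℝ] ℝ, HasFDerivAt f L x ∧ L (1, 0) = ft ∧ L (0, 1) = fx

namespace HasPartials

variable {f g : ℝ × ℝ → ℝ} {x : ℝ × ℝ} {ft fx gt gx : ℝ}

theorem pdt_eq (h : HasPartials f x ft fx) : pdt f x = ft := by
  obtain ⟨L, hL, ht, -⟩ := h
  rw [pdt, hL.fderiv, ht]

theorem pdx_eq (h : HasPartials f x ft fx) : pdx f x = fx := by
  obtain ⟨L, hL, -, hx⟩ := h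
  rw [pdx, hL.fderiv, hx]

theorem const (a : ℝ) (x : ℝ × ℝ) : HasPartials (fun _ => a) x 0 0 :=
  ⟨0, hasFDerivAt_const a x, rfl, rfl⟩

theorem add (hf : HasPartials f x ft fx) (hg : HasPartials g x gt gx) :
    HasPartials (fun q => f q + g q) x (ft + gt) (fx + gx) := by
  obtain ⟨L, hL, rfl, rfl⟩ := hf
  obtain ⟨L', hL', rfl, rfl⟩ := hg
  exact ⟨L + L', hL.add hL', rfl, rfl⟩

theorem neg (hf : HasPartials f x ft fx) : HasPartials (fun q => -f q) x (-ft) (-fx) := by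
  obtain ⟨L, hL, rfl, rfl⟩ := hf
  exact ⟨-L, hL.neg, rfl, rfl⟩

theorem mul (hf : HasPartials f x ft fx) (hg : HasPartials g x gt gx) :
    HasPartials (fun q => f q * g q) x (ft * g x + f x * gt) (fx * g x + f x * gx) := by
  obtain ⟨L, hL, rfl, rfl⟩ := hf
  obtain ⟨L', hL', rfl, rfl⟩ := hg
  refine ⟨f x • L' + g x • L, hL.mul hL', ?_, ?_⟩ <;>
    simp only [add_apply, smul_apply, smul_eq_mul] <;>
    ring

theorem sq (hf : HasPartials f x ft fx) :
    HasPartials (fun q => f q ^ 2) x (2 * f x * ft) (2 * f x * fx) := by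
  convert hf.mul hf using 1 <;> first | (funext q; ring) | ring

theorem rpow_const (hf : HasPartials f x ft fx) (e : ℝ) (hx : f x ≠ 0) :
    HasPartials (fun q => f q ^ e) x (e * f x ^ (e - 1) * ft) (e * f x ^ (e - 1) * fx) := by
  obtain ⟨L, hL, rfl, rfl⟩ := hf
  exact ⟨(e * f x ^ (e - 1)) • L, hL.rpow_const (Or.inl hx), rfl, rfl⟩

end HasPartials

theorem DifferentiableAt.hasPartials {f : ℝ × ℝ → ℝ} {x : ℝ × ℝ} (hf : DifferentiableAt ℝ f x) :
    HasPartials f x (pdt f x) (pdx f x) :=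
  ⟨fderiv ℝ f x, hf.hasFDerivAt, rfl, rfl⟩

theorem DifferentiableAt.hasPartials_of_pdt_eq {f : ℝ × ℝ → ℝ} {x : ℝ × ℝ} {ft : ℝ}
    (hf : DifferentiableAt ℝ f x) (h : pdt f x = ft) : HasPartials f x ft (pdx f x) :=
  h ▸ hf.hasPartials

section SecondDerivatives

variable {f g : ℝ × ℝ → ℝ} {x : ℝ × ℝ}

theorem ContDiffAt.differentiableAt_fderiv_apply (hf : ContDiffAt ℝ 2 f x) (v : ℝ × ℝ) :
    DifferentiableAt ℝ (fun q => fderiv ℝ f q v) x :=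
  ((hf.fderiv_right (m := 1) (by norm_num)).differentiableAt (by norm_num)).clm_apply
    (differentiableAt_const v)

theorem ContDiffAt.pdt_pdx_comm (hf : ContDiffAt ℝ 2 f x) : pdt (pdx f) x = pdx (pdt f) x := by
  have hsecond (v w : ℝ × ℝ) :
      fderiv ℝ (fun q => fderiv ℝ f q w) x v = fderiv ℝ (fderiv ℝ f) x v w := by
    have hd := (hf.fderiv_right (m := 1) (by norm_num)).differentiableAt (by norm_num)
    rw [(hd.hasFDerivAt.clm_apply (hasFDerivAt_const w x)).fderiv]
    simp
  change fderiv ℝ (fun q => fderiv ℝ f q (0, 1)) x (1, 0)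
    = fderiv ℝ (fun q => fderiv ℝ f q (1, 0)) x (0, 1)
  rw [hsecond, hsecond, hf.isSymmSndFDerivAt (by simp)]

theorem pdx_congr_of_eqOn {U : Set (ℝ × ℝ)} (hU : U ∈ 𝓝 x) (h : EqOn f g U) :
    pdx f x = pdx g x := by
  rw [pdx, pdx, (eventuallyEq_of_mem hU h).fderiv_eq]

theorem ContDiffAt.hasPartials_pdx_of_eqOn {U : Set (ℝ × ℝ)} {gt gx : ℝ}
    (hf : ContDiffAt ℝ 2 f x) (hU : U ∈ 𝓝 x) (hft : EqOn (pdt f) g U) (hg : HasPartials g x gt gx) :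
    HasPartials (pdx f) x gx (pdx (pdx f) x) := by
  have h : HasPartials (pdx f) x (pdt (pdx f) x) (pdx (pdx f) x) :=
    (hf.differentiableAt_fderiv_apply (0, 1)).hasPartials
  rwa [show pdt (pdx f) x = gx by rw [hf.pdt_pdx_comm, pdx_congr_of_eqOn hU hft, hg.pdx_eq]] at h

end SecondDerivatives

theorem riccati_of_gauge {m y : ℝ × ℝ → ℝ} {x : ℝ × ℝ} {mx c e a₀ a₂ : ℝ}
    (hm : HasPartials m x 0 mx) (hm0 : 0 < m x) (hy : DifferentiableAt ℝ y x)
    (hric : pdt y x + c * pdx y x = a₀ + a₂ * y x ^ 2 - e * c * mx / m x * y x) :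
    pdt (fun q => m q ^ e * y q) x + c * pdx (fun q => m q ^ e * y q) x
      = m x ^ e * a₀ + m x ^ (-e) * a₂ * (m x ^ e * y x) ^ 2 := by
  have h := (hm.rpow_const e hm0.ne').mul hy.hasPartials
  rw [h.pdt_eq, h.pdx_eq, rpow_sub_one hm0.ne', rpow_neg hm0.le]
  have hsq : (m x ^ e)⁻¹ * a₂ * (m x ^ e * y x) ^ 2 = m x ^ e * (a₂ * y x ^ 2) := by
    field_simp [(rpow_pos_of_pos hm0 e).ne']
  rw [hsq]
  linear_combination m x ^ e * hric

theorem rpow_div_eq_rpow_div_two_mul_sq {x : ℝ} (hx : 0 ≤ x) (a b : ℝ) :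
    x ^ (a / b) = (x ^ (a / (2 * b))) ^ 2 := by
  rw [← rpow_mul_natCast hx]
  congr 1
  push_cast
  ring

namespace Euler

variable {γ Kc : ℝ} {u z m : ℝ × ℝ → ℝ}

noncomputable def alpha (γ : ℝ) (u z m : ℝ × ℝ → ℝ) (q : ℝ × ℝ) : ℝ :=
  pdx u q + m q * pdx z q + ((γ - 1) / γ) * pdx m q * z q

noncomputable def yTilde (γ : ℝ) (u z m : ℝ × ℝ → ℝ) (q : ℝ × ℝ) : ℝ :=
  z q ^ ((γ + 1) / (2 * (γ - 1))) * alpha γ u z m q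
    + ((γ - 1) / (γ * (3 * γ - 1))) * z q ^ ((γ + 1) / (2 * (γ - 1)) + 1) * pdx m q

noncomputable def a₀Tilde (γ Kc : ℝ) (m z : ℝ × ℝ → ℝ) (q : ℝ × ℝ) : ℝ :=
  (Kc / γ) * (((γ - 1) / (3 * γ - 1)) * m q * pdx (pdx m) q
    - ((3 * γ + 1) * (γ - 1) / (3 * γ - 1) ^ 2) * (pdx m q) ^ 2)
    * z q ^ (3 * (γ + 1) / (2 * (γ - 1)) + 1)

noncomputable def a₂Tilde (γ Kc : ℝ) (z : ℝ × ℝ → ℝ) (q : ℝ × ℝ) : ℝ :=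
  -Kc * ((γ + 1) / (2 * (γ - 1))) * z q ^ ((γ + 1) / (2 * (γ - 1)) - 1)

theorem pdt_z_eq {q : ℝ × ℝ} (hz : 0 ≤ z q) (hm : m q ≠ 0)
    (heq : pdt z q + Kc * m q * z q ^ ((γ + 1) / (γ - 1)) / m q * pdx u q = 0) :
    pdt z q = -(Kc * (z q ^ ((γ + 1) / (2 * (γ - 1)))) ^ 2 * pdx u q) := by
  rw [rpow_div_eq_rpow_div_two_mul_sq hz] at heq
  field_simp at heq
  linear_combination heq

theorem pdt_u_eq {q : ℝ × ℝ} (hγ : γ ≠ 1) (hz : 0 < z q)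
    (heq : pdt u q + m q * (Kc * m q * z q ^ ((γ + 1) / (γ - 1))) * pdx z q
      + 2 * ((γ - 1) / (2 * γ) * Kc * m q ^ 2 * z q ^ (2 * γ / (γ - 1)) / m q) * pdx m q = 0) :
    pdt u q = -(Kc * m q ^ 2 * (z q ^ ((γ + 1) / (2 * (γ - 1)))) ^ 2 * pdx z q
      + (γ - 1) / γ * Kc * m q * (z q ^ ((γ + 1) / (2 * (γ - 1)))) ^ 2 * z q * pdx m q) := by
  have hexp : 2 * γ / (γ - 1) = (γ + 1) / (γ - 1) + 1 := by
    field_simp [sub_ne_zero.mpr hγ]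
    ring
  rw [hexp, rpow_add_one hz.ne', rpow_div_eq_rpow_div_two_mul_sq hz.le] at heq
  field_simp at heq ⊢
  linear_combination heq

theorem differentiableAt_yTilde {x : ℝ × ℝ} (hu : ContDiffAt ℝ 2 u x) (hz : ContDiffAt ℝ 2 z x)
    (hm : ContDiffAt ℝ 2 m x) (hz0 : z x ≠ 0) : DifferentiableAt ℝ (yTilde γ u z m) x := by
  have hux := hu.differentiableAt_fderiv_apply (0, 1)
  have hzx := hz.differentiableAt_fderiv_apply (0, 1)
  have hmx := hm.differentiableAt_fderiv_apply (0, 1)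
  have hz1 := hz.differentiableAt two_ne_zero
  have hm1 := hm.differentiableAt two_ne_zero
  unfold yTilde alpha pdx
  fun_prop (disch := exact hz0)

theorem a₂Tilde_neg {x : ℝ × ℝ} (hγ : 1 < γ) (hKc : 0 < Kc) (hz : 0 < z x) :
    a₂Tilde γ Kc z x < 0 := by
  have hk : 0 < (γ + 1) / (2 * (γ - 1)) := div_pos (by linarith) (by linarith)
  rw [a₂Tilde, neg_mul, neg_mul, neg_lt_zero]
  exact mul_pos (mul_pos hKc hk) (rpow_pos_of_pos hz _)

theorem yTilde_riccati {U : Set (ℝ × ℝ)} {x : ℝ × ℝ} (hγ : 1 < γ) (hU : U ∈ 𝓝 x)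
    (hu : ContDiffAt ℝ 2 u x) (hz : ContDiffAt ℝ 2 z x) (hm : ContDiffAt ℝ 2 m x)
    (hz0 : 0 < z x) (hm0 : 0 < m x)
    (hzt : EqOn (pdt z) (fun q => -(Kc * (z q ^ ((γ + 1) / (2 * (γ - 1)))) ^ 2 * pdx u q)) U)
    (hut : EqOn (pdt u) (fun q => -(Kc * m q ^ 2 * (z q ^ ((γ + 1) / (2 * (γ - 1)))) ^ 2 * pdx z q
      + (γ - 1) / γ * Kc * m q * (z q ^ ((γ + 1) / (2 * (γ - 1)))) ^ 2 * z q * pdx m q)) U)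
    (hmt : EqOn (pdt m) 0 U) :
    pdt (yTilde γ u z m) x
        + Kc * m x * (z x ^ ((γ + 1) / (2 * (γ - 1)))) ^ 2 * pdx (yTilde γ u z m) x
      = a₀Tilde γ Kc m z x + a₂Tilde γ Kc z x * yTilde γ u z m x ^ 2
        + 3 * (3 - γ) / (2 * (3 * γ - 1)) * (Kc * m x * (z x ^ ((γ + 1) / (2 * (γ - 1)))) ^ 2)
          * pdx m x / m x * yTilde γ u z m x := by
  have hx : x ∈ U := mem_of_mem_nhds hU
  have Hz : HasPartials z x (-(Kc * (z x ^ ((γ + 1) / (2 * (γ - 1)))) ^ 2 * pdx u x)) (pdx z x) :=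
    (hz.differentiableAt two_ne_zero).hasPartials_of_pdt_eq (hzt hx)
  have Hm : HasPartials m x 0 (pdx m x) :=
    (hm.differentiableAt two_ne_zero).hasPartials_of_pdt_eq (hmt hx)
  have Hw := Hz.rpow_const ((γ + 1) / (2 * (γ - 1))) hz0.ne'
  have Hmx : HasPartials (pdx m) x 0 (pdx (pdx m) x) :=
    hm.hasPartials_pdx_of_eqOn hU hmt (HasPartials.const 0 x)
  have Hux₀ : HasPartials (pdx u) x (pdt (pdx u) x) (pdx (pdx u) x) :=
    (hu.differentiableAt_fderiv_apply (0, 1)).hasPartials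
  have Hzx₀ : HasPartials (pdx z) x (pdt (pdx z) x) (pdx (pdx z) x) :=
    (hz.differentiableAt_fderiv_apply (0, 1)).hasPartials
  have Hzx := hz.hasPartials_pdx_of_eqOn hU hzt
    (((HasPartials.const Kc x).mul Hw.sq).mul Hux₀).neg
  have Hux := hu.hasPartials_pdx_of_eqOn hU hut
    (((((HasPartials.const Kc x).mul Hm.sq).mul Hw.sq).mul Hzx₀).add
      (((((HasPartials.const ((γ - 1) / γ * Kc) x).mul Hm).mul Hw.sq).mul Hz).mul Hmx)).neg
  have Hα := (Hux.add (Hm.mul Hzx)).add (((HasPartials.const ((γ - 1) / γ) x).mul Hmx).mul Hz)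
  have Hy : HasPartials (yTilde γ u z m) x _ _ :=
    (Hw.mul Hα).add
      (((HasPartials.const ((γ - 1) / (γ * (3 * γ - 1))) x).mul
        (Hz.rpow_const ((γ + 1) / (2 * (γ - 1)) + 1) hz0.ne')).mul Hmx)
  rw [Hy.pdt_eq, Hy.pdx_eq]
  simp only [yTilde, alpha, a₀Tilde, a₂Tilde, add_sub_cancel_right]
  have h3 : z x ^ (3 * (γ + 1) / (2 * (γ - 1)) + 1)
      = (z x ^ ((γ + 1) / (2 * (γ - 1)))) ^ 3 * z x := by
    rw [rpow_add_one hz0.ne', ← rpow_mul_natCast hz0.le]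
    congr 2
    push_cast
    ring
  rw [h3, rpow_add_one hz0.ne', rpow_sub_one hz0.ne']
  have hγ0 : γ ≠ 0 := by positivity
  have hγ1 : γ - 1 ≠ 0 := sub_ne_zero.mpr hγ.ne'
  have hγ3 : 3 * γ - 1 ≠ 0 := by linarith
  have hw : z x ^ ((γ + 1) / (2 * (γ - 1))) ≠ 0 := (rpow_pos_of_pos hz0 _).ne'
  generalize z x ^ ((γ + 1) / (2 * (γ - 1))) = w at hw ⊢
  -- `field_simp` does not clear `3 * γ - 1` from its normal form `-1 + γ * 3`
  generalize hs : 3 * γ - 1 = s at hγ3 ⊢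
  field_simp
  rw [← hs]
  ring

end Euler

theorem stmt_9_general
    (γ Kc : ℝ) (hγ : 1 < γ) (hKc : 0 < Kc)
    (U : Set (ℝ × ℝ)) (hU : IsOpen U)
    (u z m : ℝ × ℝ → ℝ)
    (hu : ContDiffOn ℝ 2 u U) (hz : ContDiffOn ℝ 2 z U) (hm : ContDiffOn ℝ 2 m U)
    (hzpos : ∀ pt ∈ U, 0 < z pt) (hmpos : ∀ pt ∈ U, 0 < m pt)
    (c p : ℝ × ℝ → ℝ)
    (hc : c = fun pt => Kc * m pt * z pt ^ ((γ + 1) / (γ - 1)))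
    (hp : p = fun pt => ((γ - 1) / (2 * γ) * Kc) * (m pt) ^ 2 * z pt ^ (2 * γ / (γ - 1)))
    (heq1 : ∀ pt ∈ U, pdt z pt + (c pt / m pt) * pdx u pt = 0)
    (heq2 : ∀ pt ∈ U, pdt u pt + m pt * c pt * pdx z pt + 2 * (p pt / m pt) * pdx m pt = 0)
    (heq3 : ∀ pt ∈ U, pdt m pt = 0)
    (α : ℝ × ℝ → ℝ)
    (hα : α = fun pt => pdx u pt + m pt * pdx z pt + ((γ - 1) / γ) * pdx m pt * z pt)
    (yt : ℝ × ℝ → ℝ)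
    (hyt : yt = fun pt => z pt ^ ((γ + 1) / (2 * (γ - 1))) * α pt
      + ((γ - 1) / (γ * (3 * γ - 1))) * z pt ^ ((γ + 1) / (2 * (γ - 1)) + 1) * pdx m pt)
    (a0t : ℝ × ℝ → ℝ)
    (ha0t : a0t = fun pt => (Kc / γ) * (((γ - 1) / (3 * γ - 1)) * m pt * pdx (pdx m) pt
      - ((3 * γ + 1) * (γ - 1) / (3 * γ - 1) ^ 2) * (pdx m pt) ^ 2)
      * z pt ^ (3 * (γ + 1) / (2 * (γ - 1)) + 1))
    (a2t : ℝ × ℝ → ℝ)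
    (ha2t : a2t = fun pt => -Kc * ((γ + 1) / (2 * (γ - 1))) * z pt ^ ((γ + 1) / (2 * (γ - 1)) - 1))
    (yf : ℝ × ℝ → ℝ)
    (hyf : yf = fun pt => m pt ^ (-(3 * (3 - γ)) / (2 * (3 * γ - 1))) * yt pt)
    (a0 a2 : ℝ × ℝ → ℝ)
    (ha0 : a0 = fun pt => m pt ^ (-(3 * (3 - γ)) / (2 * (3 * γ - 1))) * a0t pt)
    (ha2 : a2 = fun pt => m pt ^ (3 * (3 - γ) / (2 * (3 * γ - 1))) * a2t pt)
 :
    ∀ pt ∈ U,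
      pdt yf pt + c pt * pdx yf pt = a0 pt + a2 pt * (yf pt) ^ 2 ∧ a2 pt < 0 := by
  subst hc hp hα hyt ha0t ha2t hyf ha0 ha2
  intro x hx
  have hUx : U ∈ 𝓝 x := hU.mem_nhds hx
  have hux := hu.contDiffAt hUx
  have hzx := hz.contDiffAt hUx
  have hmx := hm.contDiffAt hUx
  have hzt : EqOn (pdt z) _ U := fun q hq =>
    Euler.pdt_z_eq (hzpos q hq).le (hmpos q hq).ne' (heq1 q hq)
  have hut : EqOn (pdt u) _ U := fun q hq => Euler.pdt_u_eq hγ.ne' (hzpos q hq) (heq2 q hq)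
  have hric := Euler.yTilde_riccati hγ hUx hux hzx hmx (hzpos x hx) (hmpos x hx) hzt hut heq3
  have hgauge := riccati_of_gauge (e := -(3 * (3 - γ)) / (2 * (3 * γ - 1)))
    (a₀ := Euler.a₀Tilde γ Kc m z x) (a₂ := Euler.a₂Tilde γ Kc z x)
    ((hmx.differentiableAt two_ne_zero).hasPartials_of_pdt_eq (heq3 x hx)) (hmpos x hx)
    (Euler.differentiableAt_yTilde hux hzx hmx (hzpos x hx).ne') (hric.trans (by ring))
  rw [show -(-(3 * (3 - γ)) / (2 * (3 * γ - 1))) = 3 * (3 - γ) / (2 * (3 * γ - 1)) by ring,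
    ← rpow_div_eq_rpow_div_two_mul_sq (hzpos x hx).le] at hgauge
  exact ⟨hgauge, mul_neg_of_pos_of_neg (rpow_pos_of_pos (hmpos x hx) _)
    (Euler.a₂Tilde_neg hγ hKc (hzpos x hx))⟩

/-- Theorem 1.2, equation for `y`: `y′ = a₀ + a₂·y²` with `a₂ < 0` on `U`. -/
theorem stmt_9
    (γ Kc : ℝ) (hγ : 1 < γ) (hKc : 0 < Kc)
    (U : Set (ℝ × ℝ)) (hU : IsOpen U)
    (u z m : ℝ × ℝ → ℝ)
    (hu : ContDiffOn ℝ 2 u U) (hz : ContDiffOn ℝ 2 z U) (hm : ContDiffOn ℝ 2 m U)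
    (hzpos : ∀ pt ∈ U, 0 < z pt) (hmpos : ∀ pt ∈ U, 0 < m pt)
    (c p : ℝ × ℝ → ℝ)
    (hc : c = fun pt => Kc * m pt * z pt ^ ((γ + 1) / (γ - 1)))
    (hp : p = fun pt => ((γ - 1) / (2 * γ) * Kc) * (m pt) ^ 2 * z pt ^ (2 * γ / (γ - 1)))
    (heq1 : ∀ pt ∈ U, pdt z pt + (c pt / m pt) * pdx u pt = 0)
    (heq2 : ∀ pt ∈ U, pdt u pt + m pt * c pt * pdx z pt + 2 * (p pt / m pt) * pdx m pt = 0)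
    (heq3 : ∀ pt ∈ U, pdt m pt = 0)
    (α β : ℝ × ℝ → ℝ)
    (hα : α = fun pt => pdx u pt + m pt * pdx z pt + ((γ - 1) / γ) * pdx m pt * z pt)
    (hβ : β = fun pt => pdx u pt - m pt * pdx z pt - ((γ - 1) / γ) * pdx m pt * z pt)
    (yt qt : ℝ × ℝ → ℝ)
    (hyt : yt = fun pt => z pt ^ ((γ + 1) / (2 * (γ - 1))) * α pt
      + ((γ - 1) / (γ * (3 * γ - 1))) * z pt ^ ((γ + 1) / (2 * (γ - 1)) + 1) * pdx m pt)
    (hqt : qt = fun pt => z pt ^ ((γ + 1) / (2 * (γ - 1))) * β pt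
      - ((γ - 1) / (γ * (3 * γ - 1))) * z pt ^ ((γ + 1) / (2 * (γ - 1)) + 1) * pdx m pt)
    (a0t : ℝ × ℝ → ℝ)
    (ha0t : a0t = fun pt => (Kc / γ) * (((γ - 1) / (3 * γ - 1)) * m pt * pdx (pdx m) pt
      - ((3 * γ + 1) * (γ - 1) / (3 * γ - 1) ^ 2) * (pdx m pt) ^ 2)
      * z pt ^ (3 * (γ + 1) / (2 * (γ - 1)) + 1))
    (a2t : ℝ × ℝ → ℝ)
    (ha2t : a2t = fun pt => -Kc * ((γ + 1) / (2 * (γ - 1))) * z pt ^ ((γ + 1) / (2 * (γ - 1)) - 1))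
    (yf qf : ℝ × ℝ → ℝ)
    (hyf : yf = fun pt => m pt ^ (-(3 * (3 - γ)) / (2 * (3 * γ - 1))) * yt pt)
    (hqf : qf = fun pt => m pt ^ (-(3 * (3 - γ)) / (2 * (3 * γ - 1))) * qt pt)
    (a0 a2 : ℝ × ℝ → ℝ)
    (ha0 : a0 = fun pt => m pt ^ (-(3 * (3 - γ)) / (2 * (3 * γ - 1))) * a0t pt)
    (ha2 : a2 = fun pt => m pt ^ (3 * (3 - γ) / (2 * (3 * γ - 1))) * a2t pt)
 :
    ∀ pt ∈ U,
      pdt yf pt + c pt * pdx yf pt = a0 pt + a2 pt * (yf pt) ^ 2 ∧ a2 pt < 0 :=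
  stmt_9_general γ Kc hγ hKc U hU u z m hu hz hm hzpos hmpos c p hc hp heq1 heq2 heq3 α hα yt hyt
    a0t ha0t a2t ha2t yf hyf a0 a2 ha0 ha2
end

section
/- (Theorem 1.4.) Let T > 0 and let (u,z,m) be a C² solution of the system on an open set containing [0,T] × ℝ, with constants 0 < Z_L < z < Z_U and 0 < M₁ < m < M₂ on [0,T] × ℝ, and let δ > 0 satisfy −a₂(t,x) ≥ δ for all (t,x) ∈ [0,T] × ℝ. Suppose there is A ∈ ℝ such that the initial entropy profile satisfies (x ↦ m(0,x)^(−2/(3γ−1)))''(x) ≥ 0 for all x > A, and suppose y₀ := y(0,A*) < 0 at some point A* > A. Then T < −1/(y₀·δ); in other words, |u_x| and/or |τ_x| blow up before the finite time T* = −1/(y₀·δ). -/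
/-!
Along a forward characteristic `dx/dt = c` the variable `y` satisfies the Riccati equation
`y' = a₂ y² - K (m^(-2/(3γ-1)))_xx` with `K > 0`: the mixed derivatives are eliminated with the
equations and the symmetry of second derivatives, after which the second derivatives of `u`
and `z` cancel. Since `m_t = 0` the entropy term keeps its initial sign, and since `c > 0` the
characteristic issued from `A* > A` stays in `x > A`. Hence `y' ≤ -δ y²` along it, so `1/y - δt`
increases while `y` stays negative, which forces `1/y₀ + δT < 0`.
-/

open Real

open Set

section PartialDerivatives

variable {f g : ℝ × ℝ → ℝ} {W : Set (ℝ × ℝ)} {pt : ℝ × ℝ}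

lemma fderiv_apply_eq_pdt_add_pdx (f : ℝ × ℝ → ℝ) (pt : ℝ × ℝ) (a b : ℝ) :
    fderiv ℝ f pt (a, b) = a * pdt f pt + b * pdx f pt := by
  have : ((a, b) : ℝ × ℝ) = a • ((1 : ℝ), (0 : ℝ)) + b • ((0 : ℝ), (1 : ℝ)) := by simp
  rw [this, map_add, map_smul, map_smul, smul_eq_mul, smul_eq_mul, pdt, pdx]

lemma differentiableAt_of_contDiffOn (hW : IsOpen W) (hf : ContDiffOn ℝ 2 f W) (hpt : pt ∈ W) :
    DifferentiableAt ℝ f pt :=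
  (hf.differentiableOn two_ne_zero).differentiableAt (hW.mem_nhds hpt)

lemma differentiableAt_fderiv_of_contDiffOn (hW : IsOpen W) (hf : ContDiffOn ℝ 2 f W)
    (hpt : pt ∈ W) : DifferentiableAt ℝ (fderiv ℝ f) pt :=
  ((hf.contDiffAt (hW.mem_nhds hpt)).fderiv_right (m := 1) le_rfl).differentiableAt one_ne_zero

lemma differentiableAt_pdx (hW : IsOpen W) (hf : ContDiffOn ℝ 2 f W) (hpt : pt ∈ W) :
    DifferentiableAt ℝ (pdx f) pt :=
  (ContinuousLinearMap.apply ℝ ℝ ((0 : ℝ), (1 : ℝ))).differentiableAt.comp pt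
    (differentiableAt_fderiv_of_contDiffOn hW hf hpt)

lemma pdt_pdx_comm (hW : IsOpen W) (hf : ContDiffOn ℝ 2 f W) (hpt : pt ∈ W) :
    pdt (pdx f) pt = pdx (pdt f) pt := by
  have hd := differentiableAt_fderiv_of_contDiffOn hW hf hpt
  have hsecond : ∀ v w, fderiv ℝ (fun q => fderiv ℝ f q v) pt w
      = fderiv ℝ (fderiv ℝ f) pt w v := fun v w => by
    rw [fderiv_clm_apply hd (differentiableAt_const v)]
    simp
  unfold pdt pdx
  rw [hsecond, hsecond, (hf.contDiffAt (hW.mem_nhds hpt)).isSymmSndFDerivAt (by simp)]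

lemma pdt_pdx_of_eqOn (hW : IsOpen W) (hf : ContDiffOn ℝ 2 f W) (hfg : EqOn (pdt f) g W)
    (hpt : pt ∈ W) : pdt (pdx f) pt = pdx g pt := by
  rw [pdt_pdx_comm hW hf hpt, pdx, pdx, (hfg.eventuallyEq_of_mem (hW.mem_nhds hpt)).fderiv_eq]

lemma hasDerivAt_slice_snd {t x : ℝ} (hf : DifferentiableAt ℝ f (t, x)) :
    HasDerivAt (fun s => f (t, s)) (pdx f (t, x)) x :=
  hf.hasFDerivAt.comp_hasDerivAt x ((hasDerivAt_const x t).prodMk (hasDerivAt_id x))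

lemma hasDerivAt_slice_fst {t x : ℝ} (hf : DifferentiableAt ℝ f (t, x)) :
    HasDerivAt (fun s => f (s, x)) (pdt f (t, x)) t :=
  hf.hasFDerivAt.comp_hasDerivAt t ((hasDerivAt_id t).prodMk (hasDerivAt_const t x))

lemma eq_of_pdt_eq_zero {a b t : ℝ} (hf : ∀ s ∈ Icc a b, ∀ x, DifferentiableAt ℝ f (s, x))
    (hft : ∀ s ∈ Icc a b, ∀ x, pdt f (s, x) = 0) (ht : t ∈ Icc a b) (x : ℝ) :
    f (t, x) = f (a, x) :=
  constant_of_has_deriv_right_zero (f := fun s => f (s, x))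
    (fun s hs => (hasDerivAt_slice_fst (hf s hs x)).continuousAt.continuousWithinAt)
    (fun s hs => by
      simpa [hft s (Ico_subset_Icc_self hs) x] using
        (hasDerivAt_slice_fst (hf s (Ico_subset_Icc_self hs) x)).hasDerivWithinAt) t ht

lemma deriv_deriv_rpow_slice (hW : IsOpen W) (hf : ContDiffOn ℝ 2 f W)
    (hfpos : ∀ q ∈ W, 0 < f q) {t x : ℝ} (hpt : (t, x) ∈ W) (r : ℝ) :
    deriv (deriv fun s => f (t, s) ^ r) x = r * f (t, x) ^ (r - 1) * pdx (pdx f) (t, x)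
      + r * (r - 1) * f (t, x) ^ (r - 2) * pdx f (t, x) ^ 2 := by
  have hslice : ∀ s, (t, s) ∈ W → HasDerivAt (fun s => f (t, s) ^ r)
      (pdx f (t, s) * r * f (t, s) ^ (r - 1)) s := fun s hs =>
    (hasDerivAt_slice_snd (differentiableAt_of_contDiffOn hW hf hs)).rpow_const
      (Or.inl (hfpos _ hs).ne')
  have hderiv : deriv (fun s => f (t, s) ^ r) =ᶠ[nhds x]
      fun s => pdx f (t, s) * r * f (t, s) ^ (r - 1) := by
    filter_upwards [(hW.preimage (continuous_const.prodMk continuous_id)).mem_nhds hpt]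
      with s hs using (hslice s hs).deriv
  have H : HasDerivAt (fun s => pdx f (t, s) * r * f (t, s) ^ (r - 1)) _ x :=
    ((hasDerivAt_slice_snd (differentiableAt_pdx hW hf hpt)).mul_const r).mul
      ((hasDerivAt_slice_snd (differentiableAt_of_contDiffOn hW hf hpt)).rpow_const
        (Or.inl (hfpos _ hpt).ne'))
  rw [hderiv.deriv_eq, H.deriv, show r - 2 = r - 1 - 1 by ring]
  ring

lemma hasDerivWithinAt_comp_graph {X : ℝ → ℝ} {X' t : ℝ} {s : Set ℝ}
    (hf : DifferentiableAt ℝ f (t, X t)) (hX : HasDerivWithinAt X X' s t) :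
    HasDerivWithinAt (fun τ => f (τ, X τ)) (fderiv ℝ f (t, X t) (1, X')) s t :=
  hf.hasFDerivAt.comp_hasDerivWithinAt t ((hasDerivWithinAt_id t s).prodMk hX)

end PartialDerivatives

lemma monotoneOn_Icc_of_hasDerivWithinAt_nonneg {f f' : ℝ → ℝ} {a b : ℝ}
    (hf : ∀ t ∈ Icc a b, HasDerivWithinAt f (f' t) (Icc a b) t)
    (hf' : ∀ t ∈ Icc a b, 0 ≤ f' t) : MonotoneOn f (Icc a b) :=
  monotoneOn_of_hasDerivWithinAt_nonneg (convex_Icc a b) (fun t ht => (hf t ht).continuousWithinAt)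
    (fun t ht => (hf t (interior_subset ht)).mono interior_subset)
    (fun t ht => hf' t (interior_subset ht))

theorem lt_neg_one_div_of_hasDerivWithinAt_le_neg_mul_sq {g g' : ℝ → ℝ} {T δ : ℝ}
    (hT : 0 ≤ T) (hδ : 0 < δ) (hg : ∀ t ∈ Icc 0 T, HasDerivWithinAt g (g' t) (Icc 0 T) t)
    (hg' : ∀ t ∈ Icc 0 T, g' t ≤ -δ * g t ^ 2) (hg0 : g 0 < 0) :
    T < -(1 / (g 0 * δ)) := by
  have h0 : (0 : ℝ) ∈ Icc 0 T := ⟨le_rfl, hT⟩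
  have hT' : T ∈ Icc 0 T := ⟨hT, le_rfl⟩
  have hneg : ∀ t ∈ Icc 0 T, g t < 0 := by
    have hmono_neg : MonotoneOn (-g) (Icc 0 T) :=
      monotoneOn_Icc_of_hasDerivWithinAt_nonneg (fun t ht => (hg t ht).neg)
        (fun t ht => by nlinarith [hg' t ht, sq_nonneg (g t)])
    intro t ht
    have := hmono_neg h0 ht ht.1
    simp only [Pi.neg_apply, neg_le_neg_iff] at this
    linarith
  have hmono : MonotoneOn (fun t => (g t)⁻¹ - δ * t) (Icc 0 T) := by
    refine monotoneOn_Icc_of_hasDerivWithinAt_nonneg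
      (fun t ht => ((hg t ht).inv (hneg t ht).ne).sub ((hasDerivWithinAt_id t _).const_mul δ))
      (fun t ht => ?_)
    have hsq : 0 < g t ^ 2 := by nlinarith [hneg t ht]
    rw [mul_one, sub_nonneg, le_div_iff₀ hsq]
    linarith [hg' t ht]
  have hT0 := hmono h0 hT' hT
  have hinv : (g T)⁻¹ < 0 := inv_lt_zero.2 (hneg T hT')
  simp only [mul_zero, sub_zero] at hT0
  rw [show -(1 / (g 0 * δ)) = -(g 0)⁻¹ / δ by field_simp, lt_div_iff₀ hδ]
  linarith

theorem exists_characteristic {c : ℝ × ℝ → ℝ} {T C : ℝ} (hT : 0 ≤ T)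
    (hc : ContDiffOn ℝ 1 c (Icc 0 T ×ˢ univ)) (hcC : ∀ t ∈ Icc 0 T, ∀ x, |c (t, x)| ≤ C)
    (x₀ : ℝ) :
    ∃ X : ℝ → ℝ, X 0 = x₀ ∧ ∀ t ∈ Icc 0 T, HasDerivWithinAt X (c (t, X t)) (Icc 0 T) t := by
  have hC : 0 ≤ C := (abs_nonneg _).trans (hcC 0 ⟨le_rfl, hT⟩ x₀)
  -- With speed at most `C`, the solution cannot leave the ball of radius `C * T` in time `T`.
  obtain ⟨K, hK⟩ := (hc.mono (prod_mono subset_rfl (subset_univ _))).exists_lipschitzOnWith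
    one_ne_zero ((convex_Icc 0 T).prod (convex_closedBall x₀ (C * T)))
    (isCompact_Icc.prod (isCompact_closedBall x₀ (C * T)))
  have hpl : IsPicardLindelof (fun t x => c (t, x)) (tmin := 0) (tmax := T) ⟨0, ⟨le_rfl, hT⟩⟩
      x₀ (C * T).toNNReal 0 C.toNNReal K := by
    refine ⟨fun t ht => ?_, fun x _ => ?_, fun t ht x _ => ?_, ?_⟩
    · rw [Real.coe_toNNReal _ (mul_nonneg hC hT), ← mul_one K]
      exact hK.comp (LipschitzWith.prodMk_left t).lipschitzOnWith (fun x hx => ⟨ht, hx⟩)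
    · exact hc.continuousOn.comp (continuous_id.prodMk continuous_const).continuousOn
        (fun t ht => ⟨ht, mem_univ _⟩)
    · simpa [hC] using hcC t ht x
    · simp [hC, hT, mul_nonneg hC hT]
  exact hpl.exists_eq_forall_mem_Icc_hasDerivWithinAt₀

section Euler

variable {γ Kc : ℝ} {W : Set (ℝ × ℝ)} {u z m : ℝ × ℝ → ℝ} {pt : ℝ × ℝ}

lemma pdt_pdx_z (hW : IsOpen W) (hu : ContDiffOn ℝ 2 u W) (hz : ContDiffOn ℝ 2 z W)
    (hzpos : ∀ q ∈ W, 0 < z q)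
    (hzt : ∀ q ∈ W, pdt z q = -(Kc * z q ^ ((γ + 1) / (γ - 1)) * pdx u q)) (hpt : pt ∈ W) :
    pdt (pdx z) pt = -(Kc * ((γ + 1) / (γ - 1)) * z pt ^ ((γ + 1) / (γ - 1) - 1) * pdx z pt
      * pdx u pt + Kc * z pt ^ ((γ + 1) / (γ - 1)) * pdx (pdx u) pt) := by
  have hz' := (differentiableAt_of_contDiffOn hW hz hpt).hasFDerivAt
  have hux := (differentiableAt_pdx hW hu hpt).hasFDerivAt
  have H : HasFDerivAt (fun q => -(Kc * z q ^ ((γ + 1) / (γ - 1)) * pdx u q)) _ pt :=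
    (((hz'.rpow_const (Or.inl (hzpos pt hpt).ne')).const_mul Kc).mul hux).neg
  rw [pdt_pdx_of_eqOn hW hz hzt hpt, pdx, H.fderiv]
  simp only [neg_apply, add_apply, smul_apply, smul_eq_mul]
  unfold pdx
  ring

lemma pdt_pdx_u (hW : IsOpen W) (hu : ContDiffOn ℝ 2 u W) (hz : ContDiffOn ℝ 2 z W)
    (hm : ContDiffOn ℝ 2 m W) (hzpos : ∀ q ∈ W, 0 < z q)
    (hut : ∀ q ∈ W, pdt u q = -(Kc * m q ^ 2 * z q ^ ((γ + 1) / (γ - 1)) * pdx z q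
      + (γ - 1) / γ * Kc * m q * z q ^ (2 * γ / (γ - 1)) * pdx m q)) (hpt : pt ∈ W) :
    pdt (pdx u) pt = -(Kc * (2 * m pt * pdx m pt * z pt ^ ((γ + 1) / (γ - 1)) * pdx z pt
        + m pt ^ 2 * ((γ + 1) / (γ - 1)) * z pt ^ ((γ + 1) / (γ - 1) - 1) * pdx z pt ^ 2
        + m pt ^ 2 * z pt ^ ((γ + 1) / (γ - 1)) * pdx (pdx z) pt)
      + (γ - 1) / γ * Kc * (pdx m pt ^ 2 * z pt ^ (2 * γ / (γ - 1))
        + m pt * (2 * γ / (γ - 1)) * z pt ^ (2 * γ / (γ - 1) - 1) * pdx z pt * pdx m pt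
        + m pt * z pt ^ (2 * γ / (γ - 1)) * pdx (pdx m) pt)) := by
  have hz' := (differentiableAt_of_contDiffOn hW hz hpt).hasFDerivAt
  have hm' := (differentiableAt_of_contDiffOn hW hm hpt).hasFDerivAt
  have hzx := (differentiableAt_pdx hW hz hpt).hasFDerivAt
  have hmx := (differentiableAt_pdx hW hm hpt).hasFDerivAt
  have hzr := fun r : ℝ => hz'.rpow_const (p := r) (Or.inl (hzpos pt hpt).ne')
  have H : HasFDerivAt (fun q => -(Kc * m q ^ 2 * z q ^ ((γ + 1) / (γ - 1)) * pdx z q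
      + (γ - 1) / γ * Kc * m q * z q ^ (2 * γ / (γ - 1)) * pdx m q)) _ pt :=
    (((((hm'.pow 2).const_mul Kc).mul (hzr _)).mul hzx).add
      (((hm'.const_mul ((γ - 1) / γ * Kc)).mul (hzr _)).mul hmx)).neg
  rw [pdt_pdx_of_eqOn hW hu hut hpt, pdx, H.fderiv]
  simp only [neg_apply, add_apply, smul_apply, smul_eq_mul, Pi.mul_apply]
  unfold pdx
  ring

/-- The paper's `y`, with `ỹ` and `α` unfolded. -/
noncomputable def riccatiY (γ : ℝ) (u z m : ℝ × ℝ → ℝ) (pt : ℝ × ℝ) : ℝ :=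
  m pt ^ (-(3 * (3 - γ)) / (2 * (3 * γ - 1))) *
    (z pt ^ ((γ + 1) / (2 * (γ - 1))) * (pdx u pt + m pt * pdx z pt + (γ - 1) / γ * pdx m pt * z pt)
      + (γ - 1) / (γ * (3 * γ - 1)) * z pt ^ ((γ + 1) / (2 * (γ - 1)) + 1) * pdx m pt)

lemma differentiableAt_riccatiY (hW : IsOpen W) (hu : ContDiffOn ℝ 2 u W)
    (hz : ContDiffOn ℝ 2 z W) (hm : ContDiffOn ℝ 2 m W) (hzpos : ∀ q ∈ W, 0 < z q)
    (hmpos : ∀ q ∈ W, 0 < m q) (hpt : pt ∈ W) : DifferentiableAt ℝ (riccatiY γ u z m) pt := by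
  have hz' := differentiableAt_of_contDiffOn hW hz hpt
  have hm' := differentiableAt_of_contDiffOn hW hm hpt
  exact (hm'.rpow_const (Or.inl (hmpos pt hpt).ne')).mul
    (((hz'.rpow_const (Or.inl (hzpos pt hpt).ne')).mul
      (((differentiableAt_pdx hW hu hpt).add (hm'.mul (differentiableAt_pdx hW hz hpt))).add
        (((differentiableAt_pdx hW hm hpt).const_mul _).mul hz'))).add
      (((hz'.rpow_const (Or.inl (hzpos pt hpt).ne')).const_mul _).mul
        (differentiableAt_pdx hW hm hpt)))

theorem fderiv_riccatiY_characteristic (hγ : 1 < γ) (hW : IsOpen W) (hu : ContDiffOn ℝ 2 u W)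
    (hz : ContDiffOn ℝ 2 z W) (hm : ContDiffOn ℝ 2 m W) (hzpos : ∀ q ∈ W, 0 < z q)
    (hmpos : ∀ q ∈ W, 0 < m q)
    (hzt : ∀ q ∈ W, pdt z q = -(Kc * z q ^ ((γ + 1) / (γ - 1)) * pdx u q))
    (hut : ∀ q ∈ W, pdt u q = -(Kc * m q ^ 2 * z q ^ ((γ + 1) / (γ - 1)) * pdx z q
      + (γ - 1) / γ * Kc * m q * z q ^ (2 * γ / (γ - 1)) * pdx m q))
    (hmt : ∀ q ∈ W, pdt m q = 0) {t x : ℝ} (hpt : (t, x) ∈ W) :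
    fderiv ℝ (riccatiY γ u z m) (t, x) (1, Kc * m (t, x) * z (t, x) ^ ((γ + 1) / (γ - 1))) =
      -Kc * ((γ + 1) / (2 * (γ - 1))) * m (t, x) ^ (3 * (3 - γ) / (2 * (3 * γ - 1)))
          * z (t, x) ^ ((γ + 1) / (2 * (γ - 1)) - 1) * riccatiY γ u z m (t, x) ^ 2
        - (γ - 1) / (2 * γ) * Kc * m (t, x) ^ (3 * (5 * γ - 3) / (2 * (3 * γ - 1)))
          * z (t, x) ^ ((5 * γ + 1) / (2 * (γ - 1)))
          * deriv (deriv fun s => m (t, s) ^ (-2 / (3 * γ - 1))) x := by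
  have hZ := hzpos _ hpt
  have hM := hmpos _ hpt
  have hz' := (differentiableAt_of_contDiffOn hW hz hpt).hasFDerivAt
  have hm' := (differentiableAt_of_contDiffOn hW hm hpt).hasFDerivAt
  have hux := (differentiableAt_pdx hW hu hpt).hasFDerivAt
  have hzx := (differentiableAt_pdx hW hz hpt).hasFDerivAt
  have hmx := (differentiableAt_pdx hW hm hpt).hasFDerivAt
  have hmxt : pdt (pdx m) (t, x) = 0 := by
    rw [pdt_pdx_of_eqOn hW hm hmt hpt, pdx, fderiv_const_apply]; rfl
  have H : HasFDerivAt (riccatiY γ u z m) _ (t, x) :=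
    (hm'.rpow_const (Or.inl hM.ne')).mul
      (((hz'.rpow_const (Or.inl hZ.ne')).mul
        ((hux.add (hm'.mul hzx)).add ((hmx.const_mul ((γ - 1) / γ)).mul hz'))).add
      (((hz'.rpow_const (Or.inl hZ.ne')).const_mul ((γ - 1) / (γ * (3 * γ - 1)))).mul hmx))
  rw [H.fderiv, deriv_deriv_rpow_slice hW hm hmpos hpt]
  simp only [add_apply, smul_apply, smul_eq_mul, fderiv_apply_eq_pdt_add_pdx]
  rw [hmt _ hpt, hzt _ hpt, hmxt, pdt_pdx_z hW hu hz hzpos hzt hpt,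
    pdt_pdx_u hW hu hz hm hzpos hut hpt]
  have hγ0 : γ ≠ 0 := by linarith
  have hγ1 : γ - 1 ≠ 0 := by linarith
  have hγ3 : 3 * γ - 1 ≠ 0 := by linarith
  have hk := (rpow_pos_of_pos hM (-2 / (3 * γ - 1))).ne'
  -- Every exponent is rewritten through `(γ+1)/(2(γ-1))`, `-3(3-γ)/(2(3γ-1))` and `-2/(3γ-1)`,
  -- so that once sums are split the remaining powers are independent atoms.
  rw [show (γ + 1) / (γ - 1) = (γ + 1) / (2 * (γ - 1)) + (γ + 1) / (2 * (γ - 1)) by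
      field_simp; ring,
    show 2 * γ / (γ - 1) = (γ + 1) / (2 * (γ - 1)) + (γ + 1) / (2 * (γ - 1)) + 1 by
      field_simp; ring,
    show (5 * γ + 1) / (2 * (γ - 1))
      = (γ + 1) / (2 * (γ - 1)) + (γ + 1) / (2 * (γ - 1)) + (γ + 1) / (2 * (γ - 1)) + 1 by
        field_simp; ring,
    show 3 * (3 - γ) / (2 * (3 * γ - 1)) = -(-(3 * (3 - γ)) / (2 * (3 * γ - 1))) by ring,
    show 3 * (5 * γ - 3) / (2 * (3 * γ - 1))
      = -(3 * (3 - γ)) / (2 * (3 * γ - 1)) - -2 / (3 * γ - 1) + 2 by field_simp; ring]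
  simp only [riccatiY, Pi.add_apply, Pi.mul_apply, rpow_add hZ, rpow_sub hZ, rpow_add hM,
    rpow_sub hM, rpow_neg hM.le, rpow_one, rpow_two]
  field_simp
  ring

theorem fderiv_riccatiY_characteristic_le (hγ : 1 < γ) (hKc : 0 < Kc) (hW : IsOpen W)
    (hu : ContDiffOn ℝ 2 u W) (hz : ContDiffOn ℝ 2 z W) (hm : ContDiffOn ℝ 2 m W)
    (hzpos : ∀ q ∈ W, 0 < z q) (hmpos : ∀ q ∈ W, 0 < m q)
    (hzt : ∀ q ∈ W, pdt z q = -(Kc * z q ^ ((γ + 1) / (γ - 1)) * pdx u q))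
    (hut : ∀ q ∈ W, pdt u q = -(Kc * m q ^ 2 * z q ^ ((γ + 1) / (γ - 1)) * pdx z q
      + (γ - 1) / γ * Kc * m q * z q ^ (2 * γ / (γ - 1)) * pdx m q))
    (hmt : ∀ q ∈ W, pdt m q = 0) {t x : ℝ} (hpt : (t, x) ∈ W)
    (hentropy : 0 ≤ deriv (deriv fun s => m (t, s) ^ (-2 / (3 * γ - 1))) x) :
    fderiv ℝ (riccatiY γ u z m) (t, x) (1, Kc * m (t, x) * z (t, x) ^ ((γ + 1) / (γ - 1))) ≤
      -Kc * ((γ + 1) / (2 * (γ - 1))) * m (t, x) ^ (3 * (3 - γ) / (2 * (3 * γ - 1)))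
          * z (t, x) ^ ((γ + 1) / (2 * (γ - 1)) - 1) * riccatiY γ u z m (t, x) ^ 2 := by
  rw [fderiv_riccatiY_characteristic hγ hW hu hz hm hzpos hmpos hzt hut hmt hpt]
  have hγ1 : 0 < γ - 1 := by linarith
  have := hzpos _ hpt
  have := hmpos _ hpt
  have : 0 ≤ (γ - 1) / (2 * γ) * Kc * m (t, x) ^ (3 * (5 * γ - 3) / (2 * (3 * γ - 1)))
      * z (t, x) ^ ((5 * γ + 1) / (2 * (γ - 1))) := by positivity
  nlinarith

theorem exists_monotone_characteristic (hγ : 1 < γ) (hKc : 0 < Kc) {T ZU M2 : ℝ} (hT : 0 ≤ T)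
    (hz : ContDiffOn ℝ 1 z (Icc 0 T ×ˢ univ)) (hm : ContDiffOn ℝ 1 m (Icc 0 T ×ˢ univ))
    (hzpos : ∀ t ∈ Icc 0 T, ∀ x, 0 < z (t, x)) (hmpos : ∀ t ∈ Icc 0 T, ∀ x, 0 < m (t, x))
    (hzU : ∀ t ∈ Icc 0 T, ∀ x, z (t, x) ≤ ZU) (hmU : ∀ t ∈ Icc 0 T, ∀ x, m (t, x) ≤ M2)
    (x₀ : ℝ) :
    ∃ X : ℝ → ℝ, X 0 = x₀ ∧ MonotoneOn X (Icc 0 T) ∧ ∀ t ∈ Icc 0 T,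
      HasDerivWithinAt X (Kc * m (t, X t) * z (t, X t) ^ ((γ + 1) / (γ - 1))) (Icc 0 T) t := by
  have hcpos : ∀ t ∈ Icc 0 T, ∀ x, 0 < Kc * m (t, x) * z (t, x) ^ ((γ + 1) / (γ - 1)) :=
    fun t ht x => by
      have := hzpos t ht x
      have := hmpos t ht x
      positivity
  have hcbound : ∀ t ∈ Icc 0 T, ∀ x, |Kc * m (t, x) * z (t, x) ^ ((γ + 1) / (γ - 1))|
      ≤ Kc * M2 * ZU ^ ((γ + 1) / (γ - 1)) := fun t ht x => by
    have := hzpos t ht x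
    have := (hmpos t ht x).trans_le (hmU t ht x)
    have : 0 ≤ (γ + 1) / (γ - 1) := div_nonneg (by linarith) (by linarith)
    rw [abs_of_pos (hcpos t ht x)]
    gcongr
    exacts [hmU t ht x, hzU t ht x]
  have hc : ContDiffOn ℝ 1 (fun q => Kc * m q * z q ^ ((γ + 1) / (γ - 1))) (Icc 0 T ×ˢ univ) :=
    (contDiffOn_const.mul hm).mul
      (hz.rpow_const_of_ne fun q hq => (hzpos q.1 hq.1 q.2).ne')
  obtain ⟨X, hX0, hX⟩ := exists_characteristic hT hc hcbound x₀
  exact ⟨X, hX0, monotoneOn_Icc_of_hasDerivWithinAt_nonneg hX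
    (fun t ht => (hcpos t ht (X t)).le), hX⟩

end Euler

theorem stmt_15_general (γ Kc : ℝ) (hγ : 1 < γ) (hKc : 0 < Kc)
    (T : ℝ) (hT : 0 < T)
    (W : Set (ℝ × ℝ)) (hW : IsOpen W) (hWT : Set.Icc (0 : ℝ) T ×ˢ (Set.univ : Set ℝ) ⊆ W)
    (u z m : ℝ × ℝ → ℝ)
    (hu : ContDiffOn ℝ 2 u W) (hz : ContDiffOn ℝ 2 z W) (hm : ContDiffOn ℝ 2 m W)
    (hzpos : ∀ pt ∈ W, 0 < z pt) (hmpos : ∀ pt ∈ W, 0 < m pt)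
    (c p : ℝ × ℝ → ℝ)
    (hc : c = fun pt => Kc * m pt * z pt ^ ((γ + 1) / (γ - 1)))
    (hp : p = fun pt => ((γ - 1) / (2 * γ) * Kc) * (m pt) ^ 2 * z pt ^ (2 * γ / (γ - 1)))
    (heq1 : ∀ pt ∈ W, pdt z pt + (c pt / m pt) * pdx u pt = 0)
    (heq2 : ∀ pt ∈ W, pdt u pt + m pt * c pt * pdx z pt + 2 * (p pt / m pt) * pdx m pt = 0)
    (heq3 : ∀ pt ∈ W, pdt m pt = 0)
    (ZL ZU M1 M2 : ℝ)
    (hbounds : ∀ pt ∈ Set.Icc (0 : ℝ) T ×ˢ (Set.univ : Set ℝ),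
      ZL < z pt ∧ z pt < ZU ∧ M1 < m pt ∧ m pt < M2)
    (α yt yf a2 : ℝ × ℝ → ℝ)
    (hα : α = fun pt => pdx u pt + m pt * pdx z pt + ((γ - 1) / γ) * pdx m pt * z pt)
    (hyt : yt = fun pt => z pt ^ ((γ + 1) / (2 * (γ - 1))) * α pt
      + ((γ - 1) / (γ * (3 * γ - 1))) * z pt ^ ((γ + 1) / (2 * (γ - 1)) + 1) * pdx m pt)
    (hyf : yf = fun pt => m pt ^ (-(3 * (3 - γ)) / (2 * (3 * γ - 1))) * yt pt)
    (ha2 : a2 = fun pt => -Kc * ((γ + 1) / (2 * (γ - 1))) * m pt ^ (3 * (3 - γ) / (2 * (3 * γ - 1)))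
      * z pt ^ ((γ + 1) / (2 * (γ - 1)) - 1))
    (δ : ℝ) (hδ : 0 < δ)
    (hδa2 : ∀ pt ∈ Set.Icc (0 : ℝ) T ×ˢ (Set.univ : Set ℝ), δ ≤ -a2 pt)
    (A Astar : ℝ) (hAstar : A < Astar)
    (hentropy : ∀ x : ℝ, A < x →
      0 ≤ deriv (deriv (fun s : ℝ => m (0, s) ^ (-2 / (3 * γ - 1)))) x)
    (hy0 : yf (0, Astar) < 0) :
    T < -(1 / (yf (0, Astar) * δ)) := by
  subst hc hp hα hyt hyf ha2
  have hmemW : ∀ t ∈ Icc 0 T, ∀ x, (t, x) ∈ W := fun t ht x => hWT ⟨ht, mem_univ x⟩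
  have hzt : ∀ q ∈ W, pdt z q = -(Kc * z q ^ ((γ + 1) / (γ - 1)) * pdx u q) := fun q hq => by
    rw [eq_neg_iff_add_eq_zero, ← heq1 q hq]
    field_simp [(hmpos q hq).ne']
  have hut : ∀ q ∈ W, pdt u q = -(Kc * m q ^ 2 * z q ^ ((γ + 1) / (γ - 1)) * pdx z q
      + (γ - 1) / γ * Kc * m q * z q ^ (2 * γ / (γ - 1)) * pdx m q) := fun q hq => by
    rw [eq_neg_iff_add_eq_zero, ← heq2 q hq]
    field_simp [(hmpos q hq).ne']
    ring
  obtain ⟨X, hX0, hXmono, hX⟩ := exists_monotone_characteristic hγ hKc hT.le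
    ((hz.of_le one_le_two).mono hWT) ((hm.of_le one_le_two).mono hWT)
    (fun t ht x => hzpos _ (hmemW t ht x)) (fun t ht x => hmpos _ (hmemW t ht x))
    (fun t ht x => (hbounds (t, x) ⟨ht, mem_univ x⟩).2.1.le)
    (fun t ht x => (hbounds (t, x) ⟨ht, mem_univ x⟩).2.2.2.le) Astar
  have hm_const : ∀ t ∈ Icc 0 T, ∀ x, m (t, x) = m (0, x) := fun t ht =>
    eq_of_pdt_eq_zero (fun s hs x => differentiableAt_of_contDiffOn hW hm (hmemW s hs x))
      (fun s hs x => heq3 _ (hmemW s hs x)) ht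
  change riccatiY γ u z m (0, Astar) < 0 at hy0
  change T < -(1 / (riccatiY γ u z m (0, Astar) * δ))
  rw [← hX0] at hy0 ⊢
  refine lt_neg_one_div_of_hasDerivWithinAt_le_neg_mul_sq hT.le hδ
    (fun t ht => hasDerivWithinAt_comp_graph
      (differentiableAt_riccatiY hW hu hz hm hzpos hmpos (hmemW t ht _)) (hX t ht))
    (fun t ht => ?_) hy0
  have hXA : A < X t := hAstar.trans_le (hX0 ▸ hXmono ⟨le_rfl, hT.le⟩ ht ht.1)
  have hriccati := fderiv_riccatiY_characteristic_le hγ hKc hW hu hz hm hzpos hmpos hzt hut heq3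
    (hmemW t ht _) (by simpa only [hm_const t ht] using hentropy _ hXA)
  have ha2 := hδa2 (t, X t) ⟨ht, mem_univ _⟩
  beta_reduce at ha2
  nlinarith [mul_le_mul_of_nonneg_right ha2 (sq_nonneg (riccatiY γ u z m (t, X t)))]

/-- Theorem 1.4: if the initial entropy profile satisfies
`(m^(−2/(3γ−1)))_{xx} ≥ 0` for `x > A` and `y₀ = y(0,A*) < 0` with `A* > A`,
then a smooth solution cannot exist up to time `T ≥ −1/(y₀·δ)`, where
`δ > 0` is a lower bound for `−a₂` on `[0,T] × ℝ`. -/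
theorem stmt_15 (γ Kc : ℝ) (hγ : 1 < γ) (hKc : 0 < Kc)
    (T : ℝ) (hT : 0 < T)
    (W : Set (ℝ × ℝ)) (hW : IsOpen W) (hWT : Set.Icc (0 : ℝ) T ×ˢ (Set.univ : Set ℝ) ⊆ W)
    (u z m : ℝ × ℝ → ℝ)
    (hu : ContDiffOn ℝ 2 u W) (hz : ContDiffOn ℝ 2 z W) (hm : ContDiffOn ℝ 2 m W)
    (hzpos : ∀ pt ∈ W, 0 < z pt) (hmpos : ∀ pt ∈ W, 0 < m pt)
    (c p : ℝ × ℝ → ℝ)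
    (hc : c = fun pt => Kc * m pt * z pt ^ ((γ + 1) / (γ - 1)))
    (hp : p = fun pt => ((γ - 1) / (2 * γ) * Kc) * (m pt) ^ 2 * z pt ^ (2 * γ / (γ - 1)))
    (heq1 : ∀ pt ∈ W, pdt z pt + (c pt / m pt) * pdx u pt = 0)
    (heq2 : ∀ pt ∈ W, pdt u pt + m pt * c pt * pdx z pt + 2 * (p pt / m pt) * pdx m pt = 0)
    (heq3 : ∀ pt ∈ W, pdt m pt = 0)
    (ZL ZU M1 M2 : ℝ) (hZL : 0 < ZL) (hM1 : 0 < M1)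
    (hbounds : ∀ pt ∈ Set.Icc (0 : ℝ) T ×ˢ (Set.univ : Set ℝ),
      ZL < z pt ∧ z pt < ZU ∧ M1 < m pt ∧ m pt < M2)
    (α yt yf a2 : ℝ × ℝ → ℝ)
    (hα : α = fun pt => pdx u pt + m pt * pdx z pt + ((γ - 1) / γ) * pdx m pt * z pt)
    (hyt : yt = fun pt => z pt ^ ((γ + 1) / (2 * (γ - 1))) * α pt
      + ((γ - 1) / (γ * (3 * γ - 1))) * z pt ^ ((γ + 1) / (2 * (γ - 1)) + 1) * pdx m pt)
    (hyf : yf = fun pt => m pt ^ (-(3 * (3 - γ)) / (2 * (3 * γ - 1))) * yt pt)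
    (ha2 : a2 = fun pt => -Kc * ((γ + 1) / (2 * (γ - 1))) * m pt ^ (3 * (3 - γ) / (2 * (3 * γ - 1)))
      * z pt ^ ((γ + 1) / (2 * (γ - 1)) - 1))
    (δ : ℝ) (hδ : 0 < δ)
    (hδa2 : ∀ pt ∈ Set.Icc (0 : ℝ) T ×ˢ (Set.univ : Set ℝ), δ ≤ -a2 pt)
    (A Astar : ℝ) (hAstar : A < Astar)
    (hentropy : ∀ x : ℝ, A < x →
      0 ≤ deriv (deriv (fun s : ℝ => m (0, s) ^ (-2 / (3 * γ - 1)))) x)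
    (hy0 : yf (0, Astar) < 0) :
    T < -(1 / (yf (0, Astar) * δ)) :=
  stmt_15_general γ Kc hγ hKc T hT W hW hWT u z m hu hz hm hzpos hmpos c p hc hp heq1 heq2 heq3 ZL
    ZU M1 M2 hbounds α yt yf a2 hα hyt hyf ha2 δ hδ hδa2 A Astar hAstar hentropy hy0
end
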